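/- arXiv:0706.0151 — 3 statements merged into one kernel-verified Lean document; each statement's English description precedes it below -/
import Mathlib

section
/- Let q > 1 and let z ∈ ℂ with Re(z) ≥ 0. Then the function ψ_{q,z} : (0,∞) → ℂ defined by ψ_{q,z}(x) = ( x^{1−q} + z )^{1/(1−q)} (principal branch) is Lipschitz with constant 1: for all x₀, x₁ > 0, | ψ_{q,z}(x₁) − ψ_{q,z}(x₀) | ≤ | x₁ − x₀ |. -/
open MeasureTheory ProbabilityTheory Filter Matrix
open scoped Topology

noncomputable section

/-- A random vector `X` on `(Ω, P)` has Lebesgue density `f`. -/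
def HasDensity {Ω E : Type*} [MeasurableSpace Ω] [MeasureSpace E]
    (X : Ω → E) (P : Measure Ω) (f : E → ℝ) : Prop :=
  Measure.map X P = volume.withDensity (fun x => ENNReal.ofReal (f x))

/-- Density of the chi distribution with `m` degrees of freedom and scale parameter `σ`:
`f(a) = 2^(1-m/2) σ^(-m) Γ(m/2)⁻¹ a^(m-1) exp(-a²/(2σ²))` on `(0,∞)`. -/
def chiDensity (m σ : ℝ) (x : ℝ) : ℝ :=
  if 0 < x then
    2 ^ (1 - m / 2) * σ ^ (-m) * (Real.Gamma (m / 2))⁻¹ * x ^ (m - 1) *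
      Real.exp (-x ^ 2 / (2 * σ ^ 2))
  else 0

/-- The q-Gaussian density for `q > 1` with parameter matrix `L` (`Λ` in the paper):
`f(x) = Γ(1/(q-1)) / (Γ(1/(q-1) - d/2) √(det(πΛ))) (1 + xᵀΛ⁻¹x)^(1/(1-q))`. -/
def qGaussGT (d : ℕ) (q : ℝ) (L : Matrix (Fin d) (Fin d) ℝ) (x : Fin d → ℝ) : ℝ :=
  Real.Gamma (1 / (q - 1)) /
      (Real.Gamma (1 / (q - 1) - (d : ℝ) / 2) * Real.sqrt (Real.pi • L).det) *
    (1 + x ⬝ᵥ (L⁻¹ *ᵥ x)) ^ (1 / (1 - q))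

/-- The q-Gaussian density for `q < 1` with parameter matrix `S` (`Σ` in the paper):
`f(x) = Γ((2-q)/(1-q) + d/2) / (Γ((2-q)/(1-q)) √(det(πΣ))) (1 - xᵀΣ⁻¹x)₊^(1/(1-q))`. -/
def qGaussLT (d : ℕ) (q : ℝ) (S : Matrix (Fin d) (Fin d) ℝ) (x : Fin d → ℝ) : ℝ :=
  Real.Gamma ((2 - q) / (1 - q) + (d : ℝ) / 2) /
      (Real.Gamma ((2 - q) / (1 - q)) * Real.sqrt (Real.pi • S).det) *
    (max (1 - x ⬝ᵥ (S⁻¹ *ᵥ x)) 0) ^ (1 / (1 - q))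

/-- The q-Fourier transform of a (nonnegative) probability density `f` on `ℝ^d`,
with the integrand `f(x) (1 + (1-q) i xᵀξ f(x)^(q-1))^(1/(1-q))` (principal branch),
which vanishes where `f` does. -/
def qFourier (d : ℕ) (q : ℝ) (f : (Fin d → ℝ) → ℝ) (ξ : Fin d → ℝ) : ℂ :=
  ∫ x, (f x : ℂ) *
    (1 + (1 - (q : ℂ)) * Complex.I * ((x ⬝ᵥ ξ : ℝ) : ℂ) * ((f x ^ (q - 1) : ℝ) : ℂ)) ^
      ((1 : ℂ) / (1 - (q : ℂ)))

/-- The q-product of two complex numbers (principal branch):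
`x ⊗_q y = (x^(1-q) + y^(1-q) - 1)^(1/(1-q))`. -/
def qProd (q : ℝ) (x y : ℂ) : ℂ :=
  (x ^ (1 - (q : ℂ)) + y ^ (1 - (q : ℂ)) - 1) ^ ((1 : ℂ) / (1 - (q : ℂ)))

/-- Total variation divergence between two densities on `ℝ^d`. -/
def dTV (d : ℕ) (f g : (Fin d → ℝ) → ℝ) : ℝ :=
  (1 / 2) * ∫ x, |f x - g x|

/-- Centered Gaussian density with covariance matrix `K` on `ℝ^d`. -/
def gaussDensity (d : ℕ) (K : Matrix (Fin d) (Fin d) ℝ) (x : Fin d → ℝ) : ℝ :=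
  (Real.sqrt ((2 * Real.pi) • K).det)⁻¹ * Real.exp (-(x ⬝ᵥ (K⁻¹ *ᵥ x)) / 2)

/-!
With `p = 1 - q < 0` and `w = x ^ p + z`, the derivative of `x ↦ w ^ (1 / p)` is
`w ^ (1 / p - 1) * x ^ (p - 1)`. Since `‖w‖ ≥ Re w ≥ x ^ p` and `1 / p - 1 < 0`, its norm is at most
`(x ^ p) ^ (1 / p - 1) * x ^ (p - 1) = 1`, so the mean value inequality on the convex set `(0, ∞)`
gives the Lipschitz bound.
-/

/-- The paper's `ψ_{q,z}`, written with the exponent `p = 1 - q`. -/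
def psi (p : ℝ) (z : ℂ) (x : ℝ) : ℂ := ((x : ℂ) ^ (p : ℂ) + z) ^ (p : ℂ)⁻¹

section
variable {p x : ℝ} {z : ℂ}

lemma rpow_le_re_cpow_add (hx : 0 < x) (hz : 0 ≤ z.re) : x ^ p ≤ ((x : ℂ) ^ (p : ℂ) + z).re := by
  rw [← Complex.ofReal_cpow hx.le, Complex.add_re, Complex.ofReal_re]
  linarith

lemma re_cpow_add_pos (hx : 0 < x) (hz : 0 ≤ z.re) : 0 < ((x : ℂ) ^ (p : ℂ) + z).re :=
  (Real.rpow_pos_of_pos hx p).trans_le (rpow_le_re_cpow_add hx hz)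

lemma hasDerivAt_psi (hp : p ≠ 0) (hx : 0 < x) (hz : 0 ≤ z.re) :
    HasDerivAt (psi p z)
      (((x : ℂ) ^ (p : ℂ) + z) ^ ((p⁻¹ - 1 : ℝ) : ℂ) * (x : ℂ) ^ ((p - 1 : ℝ) : ℂ)) x := by
  have hslit : (x : ℂ) ∈ Complex.slitPlane := Complex.ofReal_mem_slitPlane.mpr hx
  have hinner := (Complex.hasStrictDerivAt_cpow_const (c := (p : ℂ)) hslit).hasDerivAt.add_const z
  have h := (hinner.cpow_const (c := (p : ℂ)⁻¹) (Or.inl (re_cpow_add_pos hx hz))).comp_ofReal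
  refine h.congr_deriv ?_
  have hp' : (p : ℂ) ≠ 0 := Complex.ofReal_ne_zero.mpr hp
  push_cast
  field_simp

lemma norm_deriv_psi_le_one (hp : p < 0) (hx : 0 < x) (hz : 0 ≤ z.re) :
    ‖((x : ℂ) ^ (p : ℂ) + z) ^ ((p⁻¹ - 1 : ℝ) : ℂ) * (x : ℂ) ^ ((p - 1 : ℝ) : ℂ)‖ ≤ 1 := by
  have hxp : x ^ p ≤ ‖(x : ℂ) ^ (p : ℂ) + z‖ :=
    (rpow_le_re_cpow_add hx hz).trans (Complex.re_le_norm _)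
  rw [norm_mul, Complex.norm_cpow_real, Complex.norm_cpow_eq_rpow_re_of_pos hx, Complex.ofReal_re]
  calc ‖(x : ℂ) ^ (p : ℂ) + z‖ ^ (p⁻¹ - 1) * x ^ (p - 1)
      ≤ (x ^ p) ^ (p⁻¹ - 1) * x ^ (p - 1) := by
        have hexp : p⁻¹ - 1 ≤ 0 := by linarith [inv_lt_zero.mpr hp]
        exact mul_le_mul_of_nonneg_right
          (Real.rpow_le_rpow_of_nonpos (Real.rpow_pos_of_pos hx p) hxp hexp) (by positivity)
    _ = 1 := by
        rw [← Real.rpow_mul hx.le, ← Real.rpow_add hx, mul_sub, mul_inv_cancel₀ hp.ne]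
        simp

lemma lipschitzOnWith_psi (hp : p < 0) (hz : 0 ≤ z.re) : LipschitzOnWith 1 (psi p z) (Set.Ioi 0) :=
  (convex_Ioi 0).lipschitzOnWith_of_nnnorm_hasDerivWithin_le
    (fun _ hx => (hasDerivAt_psi hp.ne hx hz).hasDerivWithinAt)
    (fun _ hx => by exact_mod_cast norm_deriv_psi_le_one hp hx hz)

end

/-- **Lemma 2.** For `q > 1` and `z ∈ ℂ` with `Re(z) ≥ 0`, the function
`ψ_{q,z}(x) = (x^(1-q) + z)^(1/(1-q))` on `(0,∞)` is Lipschitz with constant 1. -/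
theorem psi_lipschitz_one (q : ℝ) (hq : 1 < q) (z : ℂ) (hz : 0 ≤ z.re)
    (x₀ x₁ : ℝ) (h₀ : 0 < x₀) (h₁ : 0 < x₁) :
    ‖(((x₁ : ℂ) ^ (1 - (q : ℂ)) + z) ^ ((1 : ℂ) / (1 - (q : ℂ))) -
          ((x₀ : ℂ) ^ (1 - (q : ℂ)) + z) ^ ((1 : ℂ) / (1 - (q : ℂ))))‖ ≤
      |x₁ - x₀| := by
  have hp : (1 - q : ℝ) < 0 := by linarith
  have h := (lipschitzOnWith_psi hp hz).norm_sub_le (Set.mem_Ioi.mpr h₁) (Set.mem_Ioi.mpr h₀)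
  rw [NNReal.coe_one, one_mul, Real.norm_eq_abs] at h
  have hcast : (1 : ℂ) - q = ((1 - q : ℝ) : ℂ) := by push_cast; rfl
  rwa [hcast, one_div]
end
end

section
/- Let q > 1 and q₁ > 1. Let Z₁, Z₂, Z̃₁, Z̃₂ be random vectors in ℝ^d with probability densities, and assume that for every ξ ∈ ℝ^d the four values F_q[Z₁](ξ), F_q[Z₂](ξ), F_q[Z̃₁](ξ), F_q[Z̃₂](ξ) are real and positive, and moreover F_q[Z₂](ξ)^{1−q₁} ≥ 1, F_q[Z̃₁](ξ)^{1−q₁} ≥ 1 and F_q[Z̃₂](ξ)^{1−q₁} ≥ 1. Then sup_{ξ ∈ ℝ^d} | F_q[Z₁](ξ) ⊗_{q₁} F_q[Z₂](ξ) − F_q[Z̃₁](ξ) ⊗_{q₁} F_q[Z̃₂](ξ) | ≤ 2 d_TV(Z₁, Z̃₁) + 2 d_TV(Z₂, Z̃₂). -/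
open MeasureTheory ProbabilityTheory Filter Matrix
open scoped Topology

noncomputable section

/-! For `y > 0` the `q`-Fourier integrand `y (1 + (1-q) i t y^(q-1))^(1/(1-q))` equals
`(y^(1-q) + (1-q) i t)^(1/(1-q))`, and for `a, b > 0` the `q₁`-product `a ⊗_{q₁} b` equals
`(a^(1-q₁) + (b^(1-q₁) - 1))^(1/(1-q₁))`. Both are instances of `y ↦ (y^σ + w)^(1/σ)` with
`σ < 0` and `0 ≤ Re w`, whose derivative on `(0, ∞)` has norm `|y^σ + w|^(1/σ - 1) y^(σ-1) ≤ 1`.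
So the integrand is 1-Lipschitz in the density value (across `0` because its norm is at most
`|y|`), which integrates to `|F_q[f](ξ) - F_q[g](ξ)| ≤ ∫ |f - g| = 2 d_TV(f, g)`; and the
`q₁`-product is 1-Lipschitz in each argument as long as the other one, `b`, has `b^(1-q₁) ≥ 1`.
-/
open Complex

def rpowShift (σ : ℝ) (w : ℂ) (y : ℝ) : ℂ := ((y ^ σ : ℝ) + w) ^ ((σ⁻¹ : ℝ) : ℂ)

section rpowShift

variable {σ : ℝ} {w : ℂ} {y : ℝ}

lemma rpow_le_re_rpow_add (hw : 0 ≤ w.re) : y ^ σ ≤ ((y ^ σ : ℝ) + w).re := by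
  simpa using hw

lemma hasDerivAt_rpowShift (hw : 0 ≤ w.re) (hy : 0 < y) :
    HasDerivAt (rpowShift σ w)
      ((σ⁻¹ : ℝ) * ((y ^ σ : ℝ) + w) ^ ((σ⁻¹ : ℝ) - 1 : ℂ) * (σ * y ^ (σ - 1) : ℝ)) y := by
  have hbase : (y ^ σ : ℝ) + w ∈ slitPlane :=
    mem_slitPlane_iff.2 (Or.inl ((Real.rpow_pos_of_pos hy σ).trans_le (rpow_le_re_rpow_add hw)))
  exact (hasStrictDerivAt_cpow_const hbase).hasDerivAt.comp y
    ((Real.hasDerivAt_rpow_const (Or.inl hy.ne')).ofReal_comp.add_const w)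

lemma norm_deriv_rpowShift_le (hσ : σ < 0) (hw : 0 ≤ w.re) (hy : 0 < y) :
    ‖(σ⁻¹ : ℝ) * ((y ^ σ : ℝ) + w) ^ ((σ⁻¹ : ℝ) - 1 : ℂ) * (σ * y ^ (σ - 1) : ℝ)‖ ≤ 1 := by
  have hyσ : 0 < y ^ σ := Real.rpow_pos_of_pos hy σ
  have hnorm : y ^ σ ≤ ‖((y ^ σ : ℝ) : ℂ) + w‖ := (rpow_le_re_rpow_add hw).trans (re_le_norm _)
  have hpow : ‖((y ^ σ : ℝ) : ℂ) + w‖ ^ (σ⁻¹ - 1) ≤ y ^ (1 - σ) := calc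
    _ ≤ (y ^ σ) ^ (σ⁻¹ - 1) :=
        Real.rpow_le_rpow_of_nonpos hyσ hnorm (by linarith [inv_lt_zero.2 hσ])
    _ = y ^ (1 - σ) := by rw [← Real.rpow_mul hy.le, mul_sub, mul_inv_cancel₀ hσ.ne, mul_one]
  calc _ = |σ|⁻¹ * ‖((y ^ σ : ℝ) : ℂ) + w‖ ^ (σ⁻¹ - 1) * (|σ| * y ^ (σ - 1)) := by
        rw [← ofReal_one, ← ofReal_sub, norm_mul, norm_mul, norm_cpow_real, norm_real, norm_real,
          Real.norm_eq_abs, Real.norm_eq_abs, abs_inv, abs_mul,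
          abs_of_pos (Real.rpow_pos_of_pos hy _)]
    _ ≤ |σ|⁻¹ * y ^ (1 - σ) * (|σ| * y ^ (σ - 1)) := by gcongr
    _ = 1 := by
        rw [mul_mul_mul_comm, inv_mul_cancel₀ (abs_ne_zero.2 hσ.ne), ← Real.rpow_add hy]
        norm_num

lemma norm_rpowShift_sub_le (hσ : σ < 0) (hw : 0 ≤ w.re) {u v : ℝ} (hu : 0 < u) (hv : 0 < v) :
    ‖rpowShift σ w u - rpowShift σ w v‖ ≤ |u - v| := by
  simpa using (convex_Ioi (0 : ℝ)).norm_image_sub_le_of_norm_hasDerivWithin_le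
    (fun y hy => (hasDerivAt_rpowShift hw hy).hasDerivWithinAt)
    (fun y hy => norm_deriv_rpowShift_le hσ hw hy) (Set.mem_Ioi.2 hv) (Set.mem_Ioi.2 hu)

end rpowShift

lemma ofReal_mul_cpow {r : ℝ} (hr : 0 < r) {z : ℂ} (hz : z ≠ 0) (c : ℂ) :
    ((r : ℂ) * z) ^ c = (r : ℂ) ^ c * z ^ c := by
  have hr' : (r : ℂ) ≠ 0 := ofReal_ne_zero.2 hr.ne'
  rw [cpow_def_of_ne_zero (mul_ne_zero hr' hz), log_ofReal_mul hr hz, add_mul, exp_add,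
    cpow_def_of_ne_zero hr', cpow_def_of_ne_zero hz, ofReal_log hr.le]

lemma one_add_ofReal_mul_I_ne_zero (s : ℝ) : 1 + (s : ℂ) * I ≠ 0 :=
  fun h => by simpa using congrArg re h

lemma exists_pos_ofReal_eq {z : ℂ} (hz : z.im = 0 ∧ 0 < z.re) : ∃ a : ℝ, 0 < a ∧ (a : ℂ) = z :=
  ⟨z.re, hz.2, Complex.ext (by simp) (by simp [hz.1])⟩

lemma qProd_comm (q : ℝ) (x y : ℂ) : qProd q x y = qProd q y x := by
  simp only [qProd, add_comm]

section qProd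

variable {q : ℝ}

lemma qProd_ofReal {a b : ℝ} (ha : 0 ≤ a) (hb : 0 ≤ b) :
    qProd q a b = rpowShift (1 - q) (b ^ (1 - q) - 1 : ℝ) a := by
  rw [qProd, rpowShift, ofReal_sub, ofReal_cpow ha, ofReal_cpow hb]
  push_cast
  ring_nf

lemma norm_qProd_ofReal_sub_le (hq : 1 < q) {a b c : ℝ} (ha : 0 < a) (hb : 0 < b) (hc : 0 < c)
    (hc1 : 1 ≤ c ^ (1 - q)) : ‖qProd q a c - qProd q b c‖ ≤ |a - b| := by
  rw [qProd_ofReal ha.le hc.le, qProd_ofReal hb.le hc.le]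
  exact norm_rpowShift_sub_le (by linarith) (by simpa using hc1) ha hb

lemma norm_qProd_sub_qProd_le (hq : 1 < q) {x₁ x₂ y₁ y₂ : ℂ}
    (hx₁ : x₁.im = 0 ∧ 0 < x₁.re) (hx₂ : x₂.im = 0 ∧ 0 < x₂.re)
    (hy₁ : y₁.im = 0 ∧ 0 < y₁.re) (hy₂ : y₂.im = 0 ∧ 0 < y₂.re)
    (hx₂1 : 1 ≤ x₂.re ^ (1 - q)) (hy₁1 : 1 ≤ y₁.re ^ (1 - q)) :
    ‖qProd q x₁ x₂ - qProd q y₁ y₂‖ ≤ ‖x₁ - y₁‖ + ‖x₂ - y₂‖ := by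
  obtain ⟨a₁, ha₁, rfl⟩ := exists_pos_ofReal_eq hx₁
  obtain ⟨a₂, ha₂, rfl⟩ := exists_pos_ofReal_eq hx₂
  obtain ⟨b₁, hb₁, rfl⟩ := exists_pos_ofReal_eq hy₁
  obtain ⟨b₂, hb₂, rfl⟩ := exists_pos_ofReal_eq hy₂
  simp only [ofReal_re] at hx₂1 hy₁1
  simp only [← ofReal_sub, norm_real, Real.norm_eq_abs]
  calc _ ≤ ‖qProd q a₁ a₂ - qProd q b₁ a₂‖ + ‖qProd q b₁ a₂ - qProd q b₁ b₂‖ :=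
        norm_sub_le_norm_sub_add_norm_sub _ _ _
    _ ≤ |a₁ - b₁| + |a₂ - b₂| := by
        refine add_le_add (norm_qProd_ofReal_sub_le hq ha₁ hb₁ ha₂ hx₂1) ?_
        rw [qProd_comm, qProd_comm q b₁]
        exact norm_qProd_ofReal_sub_le hq ha₂ hb₂ hb₁ hy₁1

end qProd

def qFourierIntegrand (q t y : ℝ) : ℂ :=
  (y : ℂ) * (1 + ((1 - q) * t * y ^ (q - 1) : ℝ) * I) ^ (((1 - q)⁻¹ : ℝ) : ℂ)

lemma qFourier_eq_integral (d : ℕ) (q : ℝ) (f : (Fin d → ℝ) → ℝ) (ξ : Fin d → ℝ) :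
    qFourier d q f ξ = ∫ x, qFourierIntegrand q (x ⬝ᵥ ξ) (f x) := by
  simp only [qFourier, qFourierIntegrand]
  push_cast
  congr 1
  ext x
  congr 2 <;> ring

lemma qFourierIntegrand_zero_left (q y : ℝ) : qFourierIntegrand q 0 y = y := by
  simp [qFourierIntegrand]

lemma qFourierIntegrand_zero_right (q t : ℝ) : qFourierIntegrand q t 0 = 0 := by
  simp [qFourierIntegrand]

-- `Real.rpow` at a negative base `y` is `|y| ^ p * cos (p * π)`.
lemma qFourierIntegrand_of_nonpos (q t : ℝ) {y : ℝ} (hy : y ≤ 0) :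
    qFourierIntegrand q t y = -qFourierIntegrand q (t * Real.cos ((q - 1) * Real.pi)) (-y) := by
  rcases hy.lt_or_eq with hy | rfl
  · have hpow : y ^ (q - 1) = (-y) ^ (q - 1) * Real.cos ((q - 1) * Real.pi) := by
      rw [Real.rpow_def_of_neg hy, Real.rpow_def_of_pos (neg_pos.2 hy), Real.log_neg_eq_log]
    have hphase : (1 - q) * t * ((-y) ^ (q - 1) * Real.cos ((q - 1) * Real.pi)) =
        (1 - q) * (t * Real.cos ((q - 1) * Real.pi)) * (-y) ^ (q - 1) := by ring
    rw [qFourierIntegrand, qFourierIntegrand, hpow, hphase, ofReal_neg, neg_mul, neg_neg]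
  · simp [qFourierIntegrand_zero_right]

lemma measurable_qFourierIntegrand (q : ℝ) :
    Measurable (Function.uncurry (qFourierIntegrand q)) := by
  unfold Function.uncurry qFourierIntegrand
  fun_prop

section qFourierIntegrand

variable {q : ℝ}

lemma norm_qFourierIntegrand_le (hq : 1 < q) (t y : ℝ) : ‖qFourierIntegrand q t y‖ ≤ |y| := by
  rw [qFourierIntegrand, norm_mul, norm_real, Real.norm_eq_abs, norm_cpow_real]
  refine mul_le_of_le_one_right (abs_nonneg y) (Real.rpow_le_one_of_one_le_of_nonpos ?_ ?_)
  · simpa using re_le_norm (1 + ((1 - q) * t * y ^ (q - 1) : ℝ) * I)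
  · exact (inv_neg''.2 (by linarith)).le

lemma qFourierIntegrand_of_pos (hq : 1 < q) (t : ℝ) {y : ℝ} (hy : 0 < y) :
    qFourierIntegrand q t y = rpowShift (1 - q) (((1 - q) * t : ℝ) * I) y := by
  have hyσ : 0 < y ^ (1 - q) := Real.rpow_pos_of_pos hy _
  have hy_eq : (y : ℂ) = ((y ^ (1 - q) : ℝ) : ℂ) ^ (((1 - q)⁻¹ : ℝ) : ℂ) := by
    rw [← ofReal_cpow hyσ.le, ← Real.rpow_mul hy.le, mul_inv_cancel₀ (by linarith), Real.rpow_one]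
  have hbase : ((y ^ (1 - q) : ℝ) : ℂ) * (1 + ((1 - q) * t * y ^ (q - 1) : ℝ) * I) =
      (y ^ (1 - q) : ℝ) + ((1 - q) * t : ℝ) * I := by
    have : ((y ^ (1 - q) : ℝ) : ℂ) * ((y ^ (q - 1) : ℝ) : ℂ) = 1 := by
      rw [← ofReal_mul, ← Real.rpow_add hy]; norm_num
    push_cast
    linear_combination (1 - (q : ℂ)) * t * I * this
  rw [qFourierIntegrand, rpowShift, hy_eq, ← ofReal_mul_cpow hyσ (one_add_ofReal_mul_I_ne_zero _),
    hbase]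

lemma norm_qFourierIntegrand_sub_le_of_nonneg (hq : 1 < q) (t : ℝ) {u v : ℝ} (hu : 0 ≤ u)
    (hv : 0 ≤ v) : ‖qFourierIntegrand q t u - qFourierIntegrand q t v‖ ≤ |u - v| := by
  rcases hu.eq_or_lt with rfl | hu
  · simpa [qFourierIntegrand_zero_right] using norm_qFourierIntegrand_le hq t v
  rcases hv.eq_or_lt with rfl | hv
  · simpa [qFourierIntegrand_zero_right] using norm_qFourierIntegrand_le hq t u
  rw [qFourierIntegrand_of_pos hq t hu, qFourierIntegrand_of_pos hq t hv]
  exact norm_rpowShift_sub_le (by linarith) (by simp) hu hv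

lemma norm_qFourierIntegrand_sub_le_of_nonneg_of_nonpos (hq : 1 < q) (t : ℝ) {u v : ℝ}
    (hu : 0 ≤ u) (hv : v ≤ 0) :
    ‖qFourierIntegrand q t u - qFourierIntegrand q t v‖ ≤ |u - v| := calc
  _ ≤ |u| + |v| := (norm_sub_le _ _).trans
      (add_le_add (norm_qFourierIntegrand_le hq t u) (norm_qFourierIntegrand_le hq t v))
  _ = |u - v| := by rw [abs_of_nonneg hu, abs_of_nonpos hv, abs_of_nonneg (by linarith)]; ring

lemma norm_qFourierIntegrand_sub_le (hq : 1 < q) (t u v : ℝ) :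
    ‖qFourierIntegrand q t u - qFourierIntegrand q t v‖ ≤ |u - v| := by
  rcases le_total 0 u with hu | hu <;> rcases le_total 0 v with hv | hv
  · exact norm_qFourierIntegrand_sub_le_of_nonneg hq t hu hv
  · exact norm_qFourierIntegrand_sub_le_of_nonneg_of_nonpos hq t hu hv
  · rw [norm_sub_rev, abs_sub_comm]
    exact norm_qFourierIntegrand_sub_le_of_nonneg_of_nonpos hq t hv hu
  · rw [qFourierIntegrand_of_nonpos q t hu, qFourierIntegrand_of_nonpos q t hv]
    simpa only [neg_sub_neg] using
      norm_qFourierIntegrand_sub_le_of_nonneg hq _ (neg_nonneg.2 hv) (neg_nonneg.2 hu)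

end qFourierIntegrand

section qFourier

variable {d : ℕ} {q : ℝ} {f g : (Fin d → ℝ) → ℝ}

lemma qFourier_zero : qFourier d q f 0 = ∫ x, (f x : ℂ) := by
  simp [qFourier_eq_integral, qFourierIntegrand_zero_left]

lemma integrable_of_qFourier_zero_ne_zero (h : qFourier d q f 0 ≠ 0) : Integrable f := by
  rw [qFourier_zero] at h
  simpa using (Integrable.of_integral_ne_zero h).re

lemma integrable_qFourierIntegrand (hq : 1 < q) (hf : Integrable f) (ξ : Fin d → ℝ) :
    Integrable (fun x => qFourierIntegrand q (x ⬝ᵥ ξ) (f x)) :=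
  hf.abs.mono'
    ((measurable_qFourierIntegrand q).comp_aemeasurable
      ((by fun_prop : Measurable fun x : Fin d → ℝ => x ⬝ᵥ ξ).aemeasurable.prodMk
        hf.aemeasurable)).aestronglyMeasurable
    (ae_of_all _ fun x => norm_qFourierIntegrand_le hq _ _)

lemma norm_qFourier_sub_le (hq : 1 < q) (hf : Integrable f) (hg : Integrable g) (ξ : Fin d → ℝ) :
    ‖qFourier d q f ξ - qFourier d q g ξ‖ ≤ 2 * dTV d f g := by
  rw [qFourier_eq_integral, qFourier_eq_integral,
    ← integral_sub (integrable_qFourierIntegrand hq hf ξ) (integrable_qFourierIntegrand hq hg ξ),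
    dTV, ← mul_assoc, mul_one_div_cancel two_ne_zero, one_mul]
  exact (norm_integral_le_integral_norm _).trans (integral_mono
    ((integrable_qFourierIntegrand hq hf ξ).sub (integrable_qFourierIntegrand hq hg ξ)).norm
    (hf.sub hg).abs fun x => norm_qFourierIntegrand_sub_le hq _ _ _)

end qFourier

theorem qProd_qFourier_dist_le_dTV_general
    (d : ℕ) (q q₁ : ℝ) (hq : 1 < q) (hq₁ : 1 < q₁)
    (f₁ f₂ g₁ g₂ : (Fin d → ℝ) → ℝ)
    (hreal₁ : ∀ ξ, (qFourier d q f₁ ξ).im = 0 ∧ 0 < (qFourier d q f₁ ξ).re)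
    (hreal₂ : ∀ ξ, (qFourier d q f₂ ξ).im = 0 ∧ 0 < (qFourier d q f₂ ξ).re)
    (hrealt₁ : ∀ ξ, (qFourier d q g₁ ξ).im = 0 ∧ 0 < (qFourier d q g₁ ξ).re)
    (hrealt₂ : ∀ ξ, (qFourier d q g₂ ξ).im = 0 ∧ 0 < (qFourier d q g₂ ξ).re)
    (hge₂ : ∀ ξ, 1 ≤ (qFourier d q f₂ ξ).re ^ (1 - q₁))
    (hget₁ : ∀ ξ, 1 ≤ (qFourier d q g₁ ξ).re ^ (1 - q₁)) :
    ∀ ξ : Fin d → ℝ,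
      ‖(qProd q₁ (qFourier d q f₁ ξ) (qFourier d q f₂ ξ) -
            qProd q₁ (qFourier d q g₁ ξ) (qFourier d q g₂ ξ))‖ ≤
        2 * dTV d f₁ g₁ + 2 * dTV d f₂ g₂ := by
  intro ξ
  have hint : ∀ h : (Fin d → ℝ) → ℝ, 0 < (qFourier d q h 0).re → Integrable h :=
    fun h hpos => integrable_of_qFourier_zero_ne_zero
      (ne_of_apply_ne re (by simpa using hpos.ne'))
  calc _ ≤ ‖qFourier d q f₁ ξ - qFourier d q g₁ ξ‖ + ‖qFourier d q f₂ ξ - qFourier d q g₂ ξ‖ :=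
        norm_qProd_sub_qProd_le hq₁ (hreal₁ ξ) (hreal₂ ξ) (hrealt₁ ξ) (hrealt₂ ξ) (hge₂ ξ) (hget₁ ξ)
    _ ≤ _ := add_le_add
        (norm_qFourier_sub_le hq (hint _ (hreal₁ 0).2) (hint _ (hrealt₁ 0).2) ξ)
        (norm_qFourier_sub_le hq (hint _ (hreal₂ 0).2) (hint _ (hrealt₂ 0).2) ξ)

/-- **Lemma 4.** Let `q > 1`, `q₁ > 1`, and `Z₁, Z₂, Z̃₁, Z̃₂` random vectors in `ℝ^d`
with densities, such that all four q-Fourier transforms are real and positive everywhere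
and `F_q[Z₂]^(1-q₁) ≥ 1`, `F_q[Z̃₁]^(1-q₁) ≥ 1`, `F_q[Z̃₂]^(1-q₁) ≥ 1`.  Then
`‖F_q[Z₁] ⊗_{q₁} F_q[Z₂] - F_q[Z̃₁] ⊗_{q₁} F_q[Z̃₂]‖_∞ ≤ 2 d_TV(Z₁,Z̃₁) + 2 d_TV(Z₂,Z̃₂)`. -/
theorem qProd_qFourier_dist_le_dTV
    {Ω : Type*} [MeasurableSpace Ω] (P : Measure Ω) [IsProbabilityMeasure P]
    (d : ℕ) (q q₁ : ℝ) (hq : 1 < q) (hq₁ : 1 < q₁)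
    (Z₁ Z₂ Zt₁ Zt₂ : Ω → (Fin d → ℝ))
    (hZ₁ : Measurable Z₁) (hZ₂ : Measurable Z₂)
    (hZt₁ : Measurable Zt₁) (hZt₂ : Measurable Zt₂)
    (f₁ f₂ g₁ g₂ : (Fin d → ℝ) → ℝ)
    (hf₁ : HasDensity Z₁ P f₁) (hf₂ : HasDensity Z₂ P f₂)
    (hg₁ : HasDensity Zt₁ P g₁) (hg₂ : HasDensity Zt₂ P g₂)
    (hreal₁ : ∀ ξ, (qFourier d q f₁ ξ).im = 0 ∧ 0 < (qFourier d q f₁ ξ).re)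
    (hreal₂ : ∀ ξ, (qFourier d q f₂ ξ).im = 0 ∧ 0 < (qFourier d q f₂ ξ).re)
    (hrealt₁ : ∀ ξ, (qFourier d q g₁ ξ).im = 0 ∧ 0 < (qFourier d q g₁ ξ).re)
    (hrealt₂ : ∀ ξ, (qFourier d q g₂ ξ).im = 0 ∧ 0 < (qFourier d q g₂ ξ).re)
    (hge₂ : ∀ ξ, 1 ≤ (qFourier d q f₂ ξ).re ^ (1 - q₁))
    (hget₁ : ∀ ξ, 1 ≤ (qFourier d q g₁ ξ).re ^ (1 - q₁))
    (hget₂ : ∀ ξ, 1 ≤ (qFourier d q g₂ ξ).re ^ (1 - q₁)) :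
    ∀ ξ : Fin d → ℝ,
      ‖(qProd q₁ (qFourier d q f₁ ξ) (qFourier d q f₂ ξ) -
            qProd q₁ (qFourier d q g₁ ξ) (qFourier d q g₂ ξ))‖ ≤
        2 * dTV d f₁ g₁ + 2 * dTV d f₂ g₂ :=
  qProd_qFourier_dist_le_dTV_general d q q₁ hq hq₁ f₁ f₂ g₁ g₂ hreal₁ hreal₂ hrealt₁ hrealt₂ hge₂
    hget₁
end
end

section
/- Let m > 2, let Λ be a symmetric positive definite d×d matrix, and let Z be a random vector in ℝ^d with density f_Z(z) = Γ((m+d)/2) / ( Γ(m/2) · det(πΛ)^{1/2} ) · (1 + zᵀΛ⁻¹z)^{−(m+d)/2} (the q-Gaussian density with q = (m+d+2)/(m+d) > 1). Then Y = Z / √(1 + ZᵀΛ⁻¹Z) takes values in { y : yᵀΛ⁻¹y < 1 } and has density g(y) = Γ((m+d)/2) / ( Γ(m/2) · det(πΛ)^{1/2} ) · (1 − yᵀΛ⁻¹y)_+^{(m−2)/2}, which is the q'-Gaussian density with q' = (m−4)/(m−2) < 1 and parameter matrix Σ = Λ. -/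
/-!
Write `q(y) = yᵀΛ⁻¹y`. The map `T z = z / √(1 + q z)` sends `ℝ^d` bijectively onto the ellipsoid
`{q < 1}`, with inverse `S y = y / √(1 - q y)` and `1 + q (S y) = (1 - q y)⁻¹`. Since `S` is a
radial rescaling `y ↦ φ(y) • y`, its derivative `φ(y) • id + Dφ(y) ⊗ y` is a rank-one perturbation
of a multiple of the identity; the matrix determinant lemma and Euler's identity `Dq(y) y = 2 q(y)`
give the Jacobian `(1 - q y)^(-d/2 - 1)`. The change of variables formula turns the density
`(1 + q z)^(-(m+d)/2)` into `(1 - q y)^((m+d)/2 - d/2 - 1) = (1 - q y)^((m-2)/2)` on the ellipsoid.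
-/

open MeasureTheory ProbabilityTheory Filter Matrix
open scoped Topology

noncomputable section

theorem HasFDerivAt.apply_self_of_homogeneous {𝕜 E F : Type*} [NontriviallyNormedField 𝕜]
    [NormedAddCommGroup E] [NormedSpace 𝕜 E] [NormedAddCommGroup F] [NormedSpace 𝕜 F]
    {f : E → F} {f' : E →L[𝕜] F} {x : E} {n : ℕ} (hf : HasFDerivAt f f' x)
    (hhom : ∀ t : 𝕜, f (t • x) = t ^ n • f x) : f' x = (n : 𝕜) • f x := by
  have hray : HasDerivAt (fun t : 𝕜 => t • x) x 1 := by
    simpa using (hasDerivAt_id (1 : 𝕜)).smul_const x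
  have hline : HasDerivAt (fun t : 𝕜 => f (t • x)) (f' x) 1 :=
    (one_smul 𝕜 x ▸ hf).comp_hasDerivAt 1 hray
  have hpow : HasDerivAt (fun t : 𝕜 => t ^ n • f x) ((n : 𝕜) • f x) 1 := by
    simpa using (hasDerivAt_pow n (1 : 𝕜)).smul_const (f x)
  rw [funext hhom] at hline
  exact hline.unique hpow

theorem Matrix.smul_dotProduct_mulVec_smul {ι R : Type*} [Fintype ι] [CommSemiring R]
    (M : Matrix ι ι R) (c : R) (y : ι → R) :
    (c • y) ⬝ᵥ M *ᵥ (c • y) = c ^ 2 * (y ⬝ᵥ M *ᵥ y) := by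
  rw [smul_dotProduct, mulVec_smul, dotProduct_smul, smul_eq_mul, smul_eq_mul]
  ring

theorem LinearMap.det_smul_id_add_smulRight {K ι : Type*} [Field K] [Fintype ι] [DecidableEq ι]
    {c : K} (hc : c ≠ 0) (g : (ι → K) →ₗ[K] K) (v : ι → K) :
    LinearMap.det (c • LinearMap.id + g.smulRight v) = c ^ Fintype.card ι * (1 + c⁻¹ * g v) := by
  have hfactor : c • LinearMap.id + g.smulRight v = c • (LinearMap.id + g.smulRight (c⁻¹ • v)) := by
    rw [smul_add]
    congr 1
    exact LinearMap.ext fun x => by simp [smul_comm c, smul_smul, hc]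
  have hmatrix : LinearMap.toMatrix' (LinearMap.id + g.smulRight (c⁻¹ • v)) =
      1 + replicateCol Unit (c⁻¹ • v) * replicateRow Unit (fun j => g (Pi.single j 1)) := by
    ext i j
    simp [LinearMap.toMatrix'_apply, Matrix.one_apply, Matrix.mul_apply, Pi.single_apply,
      mul_comm, mul_left_comm, mul_assoc]
  have hg : g v = ∑ i, v i * g (Pi.single i 1) := by
    rw [LinearMap.pi_apply_eq_sum_univ g v]
    refine Finset.sum_congr rfl fun i _ => ?_
    have hsingle : (fun j => if i = j then (1 : K) else 0) = Pi.single i 1 := by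
      ext j
      simp [Pi.single_apply, eq_comm]
    rw [hsingle, smul_eq_mul]
  rw [hfactor, LinearMap.det_smul, Module.finrank_fintype_fun_eq_card, ← LinearMap.det_toMatrix',
    hmatrix, det_one_add_replicateCol_mul_replicateRow, hg]
  simp only [dotProduct, Pi.smul_apply, smul_eq_mul, Finset.mul_sum]
  congr 2
  exact Finset.sum_congr rfl fun i _ => by ring

theorem Matrix.differentiable_dotProduct_mulVec_self {ι : Type*} [Fintype ι] (M : Matrix ι ι ℝ) :
    Differentiable ℝ fun y : ι → ℝ => y ⬝ᵥ M *ᵥ y := by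
  simp only [dotProduct, mulVec]
  fun_prop

theorem Matrix.fderiv_dotProduct_mulVec_self_apply_self {ι : Type*} [Fintype ι]
    (M : Matrix ι ι ℝ) (y : ι → ℝ) :
    fderiv ℝ (fun z => z ⬝ᵥ M *ᵥ z) y y = 2 * (y ⬝ᵥ M *ᵥ y) := by
  simpa using ((differentiable_dotProduct_mulVec_self M y).hasFDerivAt.apply_self_of_homogeneous
    (n := 2) fun t => smul_dotProduct_mulVec_smul M t y)

section radialRescale

variable {ι : Type*} [Fintype ι] {s : ℝ} {M : Matrix ι ι ℝ} {y : ι → ℝ}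

/-- One family for both maps: `s = 1` is `Z ↦ Y` and `s = -1` its inverse on the ellipsoid. -/
def radialRescale (s : ℝ) (M : Matrix ι ι ℝ) (y : ι → ℝ) : ι → ℝ :=
  (√(1 + s * (y ⬝ᵥ M *ᵥ y)))⁻¹ • y

theorem measurable_radialRescale (s : ℝ) (M : Matrix ι ι ℝ) : Measurable (radialRescale s M) := by
  unfold radialRescale
  fun_prop

theorem dotProduct_mulVec_radialRescale (hy : 0 ≤ 1 + s * (y ⬝ᵥ M *ᵥ y)) :
    radialRescale s M y ⬝ᵥ M *ᵥ radialRescale s M y = (y ⬝ᵥ M *ᵥ y) / (1 + s * (y ⬝ᵥ M *ᵥ y)) := by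
  rw [radialRescale, smul_dotProduct_mulVec_smul, inv_pow, Real.sq_sqrt hy, inv_mul_eq_div]

theorem one_add_neg_mul_dotProduct_mulVec_radialRescale (hy : 0 < 1 + s * (y ⬝ᵥ M *ᵥ y)) :
    1 + -s * (radialRescale s M y ⬝ᵥ M *ᵥ radialRescale s M y) = (1 + s * (y ⬝ᵥ M *ᵥ y))⁻¹ := by
  rw [dotProduct_mulVec_radialRescale hy.le]
  field_simp
  ring

theorem radialRescale_neg_radialRescale (hy : 0 < 1 + s * (y ⬝ᵥ M *ᵥ y)) :
    radialRescale (-s) M (radialRescale s M y) = y := by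
  rw [radialRescale, one_add_neg_mul_dotProduct_mulVec_radialRescale hy, Real.sqrt_inv, inv_inv,
    radialRescale, smul_smul, mul_inv_cancel₀ (Real.sqrt_pos.2 hy).ne', one_smul]

theorem hasFDerivAt_radialRescale (hy : 0 < 1 + s * (y ⬝ᵥ M *ᵥ y)) :
    HasFDerivAt (radialRescale s M)
      ((√(1 + s * (y ⬝ᵥ M *ᵥ y)))⁻¹ • ContinuousLinearMap.id ℝ (ι → ℝ) +
        ((-s / (2 * (1 + s * (y ⬝ᵥ M *ᵥ y)) * √(1 + s * (y ⬝ᵥ M *ᵥ y)))) •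
          fderiv ℝ (fun z => z ⬝ᵥ M *ᵥ z) y).smulRight y) y := by
  have haffine : HasDerivAt (fun t => 1 + s * t) s (y ⬝ᵥ M *ᵥ y) := by
    simpa using ((hasDerivAt_id _).const_mul s).const_add 1
  have hsqrt : HasDerivAt (fun t => √(1 + s * t))
      (1 / (2 * √(1 + s * (y ⬝ᵥ M *ᵥ y))) * s) (y ⬝ᵥ M *ᵥ y) :=
    (Real.hasDerivAt_sqrt hy.ne').comp (h := fun t => 1 + s * t) _ haffine
  have hscale := (hsqrt.inv (Real.sqrt_pos.2 hy).ne').comp_hasFDerivAt y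
    (differentiable_dotProduct_mulVec_self M y).hasFDerivAt
  refine (hscale.smul (hasFDerivAt_id y)).congr_fderiv ?_
  simp only [Function.comp_apply, Pi.inv_apply, id, Real.sq_sqrt hy.le]
  congr 3
  field_simp

theorem det_fderiv_radialRescale (hy : 0 < 1 + s * (y ⬝ᵥ M *ᵥ y)) :
    (fderiv ℝ (radialRescale s M) y).det =
      (1 + s * (y ⬝ᵥ M *ᵥ y)) ^ (-(Fintype.card ι : ℝ) / 2 - 1) := by
  classical
  have hpow : (√(1 + s * (y ⬝ᵥ M *ᵥ y)))⁻¹ ^ Fintype.card ι =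
      (1 + s * (y ⬝ᵥ M *ᵥ y)) ^ (-(Fintype.card ι : ℝ) / 2) := by
    rw [← Real.rpow_natCast, Real.sqrt_eq_rpow, ← Real.rpow_neg hy.le, ← Real.rpow_mul hy.le]
    ring_nf
  have hrankOne : 1 + √(1 + s * (y ⬝ᵥ M *ᵥ y)) *
      (-s / (2 * (1 + s * (y ⬝ᵥ M *ᵥ y)) * √(1 + s * (y ⬝ᵥ M *ᵥ y))) * (2 * (y ⬝ᵥ M *ᵥ y))) =
      (1 + s * (y ⬝ᵥ M *ᵥ y))⁻¹ := by
    have hsqrt_ne : √(1 + s * (y ⬝ᵥ M *ᵥ y)) ≠ 0 := (Real.sqrt_pos.2 hy).ne'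
    field_simp
    ring
  rw [(hasFDerivAt_radialRescale hy).fderiv, ContinuousLinearMap.det,
    ContinuousLinearMap.toLinearMap_add, ContinuousLinearMap.toLinearMap_smul,
    ContinuousLinearMap.coe_id, ContinuousLinearMap.coe_smulRight,
    LinearMap.det_smul_id_add_smulRight (inv_ne_zero (Real.sqrt_pos.2 hy).ne'),
    ContinuousLinearMap.coe_coe, _root_.smul_apply, fderiv_dotProduct_mulVec_self_apply_self,
    inv_inv, smul_eq_mul, hrankOne, hpow, Real.rpow_sub_one hy.ne']
  exact (div_eq_mul_inv _ _).symm

end radialRescale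

theorem MeasureTheory.Measure.map_withDensity_eq_withDensity_of_inverse {E : Type*}
    [NormedAddCommGroup E] [NormedSpace ℝ E] [FiniteDimensional ℝ E] [MeasurableSpace E]
    [BorelSpace E] (μ : Measure E) [μ.IsAddHaarMeasure] {s : Set E} (hs : MeasurableSet s)
    {T S : E → E} (hT : Measurable T) (hTs : ∀ x, T x ∈ s) (hST : ∀ x, S (T x) = x)
    (hTS : ∀ y ∈ s, T (S y) = y) (hS : ∀ y ∈ s, DifferentiableAt ℝ S y) (f : E → ENNReal) :
    (μ.withDensity f).map T =
      μ.withDensity (s.indicator fun y => ENNReal.ofReal |(fderiv ℝ S y).det| * f (S y)) := by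
  have hpreimage : ∀ A, T ⁻¹' A = S '' (s ∩ A) := fun A => by
    ext x
    constructor
    · exact fun hx => ⟨T x, ⟨hTs x, hx⟩, hST x⟩
    · rintro ⟨y, ⟨hys, hyA⟩, rfl⟩
      simpa [hTS y hys] using hyA
  ext A hA
  rw [map_apply hT hA, withDensity_apply _ (hT hA), withDensity_apply _ hA,
    setLIntegral_indicator hs, hpreimage,
    lintegral_image_eq_lintegral_abs_det_fderiv_mul μ (hs.inter hA)
      (fun y hy => (hS y hy.1).hasFDerivAt.hasFDerivWithinAt)
      (Set.LeftInvOn.injOn fun y hy => hTS y hy.1)]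

theorem indicator_abs_det_fderiv_mul_density_radialRescale {ι : Type*} [Fintype ι]
    (M : Matrix ι ι ℝ) {m : ℝ} (hm : 2 < m) (C : ℝ) (y : ι → ℝ) :
    {y | y ⬝ᵥ M *ᵥ y < 1}.indicator
        (fun y => ENNReal.ofReal |(fderiv ℝ (radialRescale (-1) M) y).det| *
          ENNReal.ofReal (C * (1 + radialRescale (-1) M y ⬝ᵥ M *ᵥ radialRescale (-1) M y) ^
            (-(m + Fintype.card ι) / 2))) y =
      ENNReal.ofReal (C * max (1 - y ⬝ᵥ M *ᵥ y) 0 ^ ((m - 2) / 2)) := by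
  by_cases hy : y ⬝ᵥ M *ᵥ y < 1
  · have hpos : 0 < 1 - y ⬝ᵥ M *ᵥ y := sub_pos.2 hy
    have hpos' : 0 < 1 + -1 * (y ⬝ᵥ M *ᵥ y) := by linarith
    have hdet := det_fderiv_radialRescale hpos'
    have hinv := one_add_neg_mul_dotProduct_mulVec_radialRescale hpos'
    simp only [neg_neg, one_mul, neg_one_mul, ← sub_eq_add_neg] at hdet hinv
    rw [Set.indicator_of_mem (show y ∈ {y | y ⬝ᵥ M *ᵥ y < 1} from hy),
      ← ENNReal.ofReal_mul (abs_nonneg _), hdet, hinv, max_eq_left hpos.le,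
      abs_of_pos (Real.rpow_pos_of_pos hpos _), Real.inv_rpow hpos.le, ← Real.rpow_neg hpos.le,
      mul_left_comm, ← Real.rpow_add hpos]
    congr 3
    ring
  · have hm' : (m - 2) / 2 ≠ 0 := by linarith
    rw [Set.indicator_of_notMem (show y ∉ {y | y ⬝ᵥ M *ᵥ y < 1} from hy),
      max_eq_right (by linarith), Real.zero_rpow hm', mul_zero, ENNReal.ofReal_zero]

theorem qGaussLT_sub_four_div_sub_two (d : ℕ) {m : ℝ} (hm : m ≠ 2)
    (S : Matrix (Fin d) (Fin d) ℝ) (y : Fin d → ℝ) :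
    qGaussLT d ((m - 4) / (m - 2)) S y =
      Real.Gamma ((m + d) / 2) / (Real.Gamma (m / 2) * Real.sqrt (Real.pi • S).det) *
        (max (1 - y ⬝ᵥ (S⁻¹ *ᵥ y)) 0) ^ ((m - 2) / 2) := by
  have hm2 : m - 2 ≠ 0 := sub_ne_zero.2 hm
  have hgamma : (2 - (m - 4) / (m - 2)) / (1 - (m - 4) / (m - 2)) = m / 2 := by
    field_simp
    ring
  have hexponent : 1 / (1 - (m - 4) / (m - 2)) = (m - 2) / 2 := by
    field_simp
    ring
  rw [qGaussLT, hgamma, hexponent, ← add_div]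

theorem qGaussian_gt_to_lt_transform_general
    {Ω : Type*} [MeasurableSpace Ω] (P : Measure Ω)
    (d : ℕ) (m : ℝ) (hm : 2 < m)
    (L : Matrix (Fin d) (Fin d) ℝ) (hL : L.PosDef)
    (Z : Ω → (Fin d → ℝ)) (hZmeas : Measurable Z)
    (hZ : HasDensity Z P
      (fun z =>
        Real.Gamma ((m + d) / 2) / (Real.Gamma (m / 2) * Real.sqrt (Real.pi • L).det) *
          (1 + z ⬝ᵥ (L⁻¹ *ᵥ z)) ^ (-(m + (d : ℝ)) / 2)))
    (Y : Ω → (Fin d → ℝ))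
    (hY : ∀ ω, Y ω = (Real.sqrt (1 + Z ω ⬝ᵥ (L⁻¹ *ᵥ Z ω)))⁻¹ • Z ω) :
    (∀ ω, Y ω ⬝ᵥ (L⁻¹ *ᵥ Y ω) < 1) ∧
    HasDensity Y P
      (fun y =>
        Real.Gamma ((m + d) / 2) / (Real.Gamma (m / 2) * Real.sqrt (Real.pi • L).det) *
          (max (1 - y ⬝ᵥ (L⁻¹ *ᵥ y)) 0) ^ ((m - 2) / 2)) ∧
    (∀ y,
      Real.Gamma ((m + d) / 2) / (Real.Gamma (m / 2) * Real.sqrt (Real.pi • L).det) *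
          (max (1 - y ⬝ᵥ (L⁻¹ *ᵥ y)) 0) ^ ((m - 2) / 2) =
        qGaussLT d ((m - 4) / (m - 2)) L y) ∧
    (m - 4) / (m - 2) < 1 := by
  have hpos : ∀ z : Fin d → ℝ, 0 < 1 + 1 * (z ⬝ᵥ L⁻¹ *ᵥ z) := fun z => by
    have hnonneg : 0 ≤ z ⬝ᵥ L⁻¹ *ᵥ z := by
      simpa using hL.inv.posSemidef.dotProduct_mulVec_nonneg z
    linarith
  have hball : ∀ z, radialRescale 1 L⁻¹ z ⬝ᵥ L⁻¹ *ᵥ radialRescale 1 L⁻¹ z < 1 := fun z => by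
    rw [dotProduct_mulVec_radialRescale (hpos z).le, div_lt_one (hpos z)]
    linarith
  have hYZ : Y = radialRescale 1 L⁻¹ ∘ Z := funext fun ω => by simp [hY, radialRescale]
  refine ⟨fun ω => hYZ ▸ hball (Z ω), ?_,
    fun y => (qGaussLT_sub_four_div_sub_two d hm.ne' L y).symm,
    (div_lt_one (by linarith)).2 (by linarith)⟩
  have hinverse : ∀ y ∈ {y | y ⬝ᵥ L⁻¹ *ᵥ y < 1}, 0 < 1 + -1 * (y ⬝ᵥ L⁻¹ *ᵥ y) :=
    fun y (hy : y ⬝ᵥ L⁻¹ *ᵥ y < 1) => by linarith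
  unfold HasDensity at hZ ⊢
  rw [hYZ, ← Measure.map_map (measurable_radialRescale 1 L⁻¹) hZmeas, hZ,
    Measure.map_withDensity_eq_withDensity_of_inverse volume
      (measurableSet_lt (differentiable_dotProduct_mulVec_self L⁻¹).continuous.measurable
        measurable_const)
      (measurable_radialRescale 1 L⁻¹) hball (fun z => radialRescale_neg_radialRescale (hpos z))
      (fun y hy => by simpa using radialRescale_neg_radialRescale (hinverse y hy))
      (fun y hy => (hasFDerivAt_radialRescale (hinverse y hy)).differentiableAt)]
  have hdensity := indicator_abs_det_fderiv_mul_density_radialRescale L⁻¹ hm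
    (Real.Gamma ((m + d) / 2) / (Real.Gamma (m / 2) * Real.sqrt (Real.pi • L).det))
  simp only [Fintype.card_fin] at hdensity
  exact congrArg _ (funext hdensity)

/-- If `Z` has the q-Gaussian density `Γ((m+d)/2)/(Γ(m/2)√det(πΛ)) (1 + zᵀΛ⁻¹z)^(-(m+d)/2)`
(`q = (m+d+2)/(m+d) > 1`), then `Y = Z/√(1 + ZᵀΛ⁻¹Z)` takes values in the ellipsoid
`{y : yᵀΛ⁻¹y < 1}` and has density `Γ((m+d)/2)/(Γ(m/2)√det(πΛ)) (1 - yᵀΛ⁻¹y)₊^((m-2)/2)`,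
the q'-Gaussian density with `q' = (m-4)/(m-2) < 1` and parameter matrix `Σ = Λ`. -/
theorem qGaussian_gt_to_lt_transform
    {Ω : Type*} [MeasurableSpace Ω] (P : Measure Ω) [IsProbabilityMeasure P]
    (d : ℕ) (hd : 0 < d) (m : ℝ) (hm : 2 < m)
    (L : Matrix (Fin d) (Fin d) ℝ) (hL : L.PosDef)
    (Z : Ω → (Fin d → ℝ)) (hZmeas : Measurable Z)
    (hZ : HasDensity Z P
      (fun z =>
        Real.Gamma ((m + d) / 2) / (Real.Gamma (m / 2) * Real.sqrt (Real.pi • L).det) *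
          (1 + z ⬝ᵥ (L⁻¹ *ᵥ z)) ^ (-(m + (d : ℝ)) / 2)))
    (Y : Ω → (Fin d → ℝ))
    (hY : ∀ ω, Y ω = (Real.sqrt (1 + Z ω ⬝ᵥ (L⁻¹ *ᵥ Z ω)))⁻¹ • Z ω) :
    (∀ ω, Y ω ⬝ᵥ (L⁻¹ *ᵥ Y ω) < 1) ∧
    HasDensity Y P
      (fun y =>
        Real.Gamma ((m + d) / 2) / (Real.Gamma (m / 2) * Real.sqrt (Real.pi • L).det) *
          (max (1 - y ⬝ᵥ (L⁻¹ *ᵥ y)) 0) ^ ((m - 2) / 2)) ∧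
    (∀ y,
      Real.Gamma ((m + d) / 2) / (Real.Gamma (m / 2) * Real.sqrt (Real.pi • L).det) *
          (max (1 - y ⬝ᵥ (L⁻¹ *ᵥ y)) 0) ^ ((m - 2) / 2) =
        qGaussLT d ((m - 4) / (m - 2)) L y) ∧
    (m - 4) / (m - 2) < 1 :=
  qGaussian_gt_to_lt_transform_general P d m hm L hL Z hZmeas hZ Y hY
end
end
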